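/- arXiv:2509.08483 — 5 statements merged into one kernel-verified Lean document; each statement's English description precedes it below -/
import Mathlib

section
/- Let β ∈ (0,1) and define the sequence v_1 = 1/(1-β) and v_m = v_{m-1}/(1-β) + (β/(1-β)) Σ_{j=1}^{m-1} v_j v_{m-j} for m ≥ 2. Then for all m ≥ 1, v_{m+1} = N_m(β)/(1-β)^{2m+1}, where N_m(β) = Σ_{k=1}^{m} (1/m) C(m,k) C(m,k-1) β^{m-k} is the m-th Narayana polynomial. -/
/-!
Extended by `N₀ = 1`, the Narayana polynomials satisfy the three-term recurrence
`(n + 3) N_{n+2} = (2n + 3)(1 + β) N_{n+1} - n (1 - β)² N_n`, which is checked coefficientwise on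
the closed form. Together with the symmetry `2 ∑_{a+b=n} a N_a N_b = n ∑_{a+b=n} N_a N_b`, it turns
into the quadratic recurrence `N_{n+1} = (1 - β) N_n + β ∑_{a+b=n} N_a N_b` by a two-step induction
(the sequence form of the Riccati equation for the generating function). The rescaled sequence
`(1 - β)^{2m+1} v_{m+1}` obeys the same quadratic recurrence with the same initial value.
-/

open Finset

/-- The `m`-th Narayana polynomial `N_m(β) = ∑_{k=1}^m (1/m) C(m,k) C(m,k-1) β^{m-k}`. -/
noncomputable def narayana (m : ℕ) (β : ℝ) : ℝ :=
  ∑ k ∈ Finset.Icc 1 m, (1 / (m : ℝ)) * (Nat.choose m k : ℝ) * (Nat.choose m (k - 1) : ℝ) *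
    β ^ (m - k)

open Polynomial

theorem Nat.cast_choose_eq_descPochhammer_eval_div {K : Type*} [Field K] [CharZero K] (m k : ℕ) :
    (m.choose k : K) = (descPochhammer K k).eval (m : K) / k.factorial := by
  rw [descPochhammer_eval_eq_descFactorial, Nat.descFactorial_eq_factorial_mul_choose,
    Nat.cast_mul, mul_div_cancel_left₀ _ (Nat.cast_ne_zero.2 k.factorial_ne_zero)]

theorem descPochhammer_succ_eval_add_one {R : Type*} [CommRing R] (k : ℕ) (x : R) :
    (descPochhammer R (k + 1)).eval (x + 1) = (x + 1) * (descPochhammer R k).eval x := by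
  simp [descPochhammer_succ_left]

noncomputable def narayanaCoeff (m j : ℕ) : ℝ := m.choose j * m.choose (j + 1) / m

theorem narayanaCoeff_eq_zero_of_le {m j : ℕ} (h : m ≤ j) : narayanaCoeff m j = 0 := by
  simp [narayanaCoeff, Nat.choose_eq_zero_of_lt (Nat.lt_succ_of_le h)]

theorem narayanaCoeff_zero {m : ℕ} (hm : m ≠ 0) : narayanaCoeff m 0 = 1 := by
  simp [narayanaCoeff, hm]

theorem narayanaCoeff_one (m : ℕ) : narayanaCoeff m 1 = m * (m - 1) / 2 := by
  rcases eq_or_ne m 0 with rfl | hm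
  · simp [narayanaCoeff]
  · rw [narayanaCoeff, Nat.choose_one_right, Nat.cast_choose_two]
    field_simp

theorem narayanaCoeff_recurrence (n j : ℕ) :
    (n + 3) * narayanaCoeff (n + 2) (j + 2) =
      (2 * n + 3) * (narayanaCoeff (n + 1) (j + 2) + narayanaCoeff (n + 1) (j + 1)) -
        n * (narayanaCoeff n (j + 2) - 2 * narayanaCoeff n (j + 1) + narayanaCoeff n j) := by
  have hn : (n : ℝ) * (narayanaCoeff n (j + 2) - 2 * narayanaCoeff n (j + 1) + narayanaCoeff n j) =
      n.choose (j + 2) * n.choose (j + 3) - 2 * (n.choose (j + 1) * n.choose (j + 2)) +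
        n.choose j * n.choose (j + 1) := by
    rcases n.eq_zero_or_pos with rfl | hn
    · simp
    · simp only [narayanaCoeff]
      field_simp
  rw [hn]
  simp only [narayanaCoeff, Nat.cast_choose_eq_descPochhammer_eval_div]
  push_cast
  -- `descPochhammer` keeps track of the vanishing binomials, so no case split on `n` against `j`.
  rw [show (n : ℝ) + 2 = n + 1 + 1 by ring]
  simp only [descPochhammer_succ_eval_add_one]
  simp only [descPochhammer_succ_eval, Nat.factorial_succ]
  push_cast
  field_simp
  ring

noncomputable def narayanaPoly (m : ℕ) : ℝ[X] := ∑ j ∈ range m, C (narayanaCoeff m j) * X ^ j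

theorem coeff_narayanaPoly (m j : ℕ) : (narayanaPoly m).coeff j = narayanaCoeff m j := by
  simp only [narayanaPoly, finsetSum_coeff, coeff_C_mul_X_pow, sum_ite_eq, mem_range]
  split_ifs with h
  · rfl
  · exact (narayanaCoeff_eq_zero_of_le (not_lt.1 h)).symm

theorem eval_narayanaPoly (m : ℕ) (β : ℝ) : (narayanaPoly m).eval β = narayana m β := by
  simp only [narayanaPoly, eval_finsetSum, eval_mul, eval_C, eval_pow, eval_X, narayana]
  refine sum_nbij' (fun j => m - j) (fun k => m - k) ?_ ?_ ?_ ?_ ?_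
  · intro j hj; simp only [mem_range, mem_Icc] at hj ⊢; omega
  · intro k hk; simp only [mem_range, mem_Icc] at hk ⊢; omega
  · intro j hj; simp only [mem_range] at hj; omega
  · intro k hk; simp only [mem_Icc] at hk; omega
  · intro j hj
    simp only [mem_range] at hj
    rw [narayanaCoeff, ← Nat.choose_symm hj.le, ← Nat.choose_symm (show j + 1 ≤ m by omega),
      show m - (j + 1) = m - j - 1 by omega, show m - (m - j) = j by omega]
    ring

theorem narayanaPoly_recurrence (n : ℕ) :
    C (n + 3 : ℝ) * narayanaPoly (n + 2) =
      C (2 * n + 3 : ℝ) * (1 + X) * narayanaPoly (n + 1) -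
        C (n : ℝ) * (1 - X) ^ 2 * narayanaPoly n := by
  have h1 : (1 + X : ℝ[X]) = 1 + X ^ 1 := by ring
  have h2 : (1 - X : ℝ[X]) ^ 2 = 1 - C 2 * X ^ 1 + X ^ 2 := by rw [C_ofNat]; ring
  rw [h1, h2]
  ext (_ | _ | j) <;>
    simp only [mul_assoc, add_mul, sub_mul, one_mul, coeff_C_mul, coeff_add, coeff_sub,
      coeff_X_pow_mul', coeff_narayanaPoly]
  · rcases n with _ | n
    · norm_num [narayanaCoeff_zero]
    · norm_num [narayanaCoeff_zero]
      ring
  · rcases n with _ | n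
    · norm_num [narayanaCoeff_zero, narayanaCoeff_one]
    · norm_num [narayanaCoeff_zero, narayanaCoeff_one]
      ring
  · simp only [le_add_iff_nonneg_left, zero_le, if_true, Nat.add_sub_cancel, Nat.reduceSubDiff]
    linear_combination narayanaCoeff_recurrence n j

def selfConvolution {R : Type*} [CommSemiring R] (u : ℕ → R) (n : ℕ) : R :=
  ∑ p ∈ antidiagonal n, u p.1 * u p.2

theorem two_mul_sum_antidiagonal_fst_mul {R : Type*} [CommSemiring R] (u : ℕ → R) (n : ℕ) :
    2 * ∑ p ∈ antidiagonal n, p.1 * (u p.1 * u p.2) = n * selfConvolution u n := by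
  rw [two_mul, selfConvolution]
  nth_rewrite 2 [← Nat.sum_antidiagonal_swap]
  rw [← sum_add_distrib, mul_sum]
  refine sum_congr rfl fun p hp => ?_
  rw [← mem_antidiagonal.1 hp, Prod.fst_swap, Prod.snd_swap]
  push_cast
  ring

section ThreeTerm

variable {β : ℝ} {u : ℕ → ℝ}

theorem selfConvolution_recurrence_of_three_term (h0 : u 0 = 1) (h1 : u 1 = 1)
    (hrec : ∀ n : ℕ,
      (n + 3) * u (n + 2) = (2 * n + 3) * (1 + β) * u (n + 1) - n * (1 - β) ^ 2 * u n)
    (n : ℕ) :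
    (n + 4) * selfConvolution u (n + 2) =
      2 * u (n + 2) + 4 * u (n + 1) +
        2 * (1 + β) * ((n + 2) * selfConvolution u (n + 1) - u (n + 1)) -
        (1 - β) ^ 2 * n * selfConvolution u n := by
  have hA : ∑ p ∈ antidiagonal (n + 2), p.1 * (u p.1 * u p.2) + selfConvolution u (n + 2) =
      u (n + 2) + 2 * u (n + 1) + ∑ p ∈ antidiagonal n, (p.1 + 3 : ℝ) * u (p.1 + 2) * u p.2 := by
    rw [selfConvolution, ← sum_add_distrib, Nat.sum_antidiagonal_succ, Nat.sum_antidiagonal_succ,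
      h0, h1, ← add_assoc]
    congr 1
    · push_cast; ring
    · exact sum_congr rfl fun p _ => by push_cast; ring
  have hB : ∑ p ∈ antidiagonal n, (p.1 + 3 : ℝ) * u (p.1 + 2) * u p.2 =
      (1 + β) * ∑ p ∈ antidiagonal n, (2 * p.1 + 3 : ℝ) * u (p.1 + 1) * u p.2 -
        (1 - β) ^ 2 * ∑ p ∈ antidiagonal n, p.1 * (u p.1 * u p.2) := by
    rw [mul_sum, mul_sum, ← sum_sub_distrib]
    refine sum_congr rfl fun p _ => ?_
    linear_combination u p.2 * hrec p.1
  have hC : 2 * ∑ p ∈ antidiagonal (n + 1), p.1 * (u p.1 * u p.2) + selfConvolution u (n + 1) =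
      u (n + 1) + ∑ p ∈ antidiagonal n, (2 * p.1 + 3 : ℝ) * u (p.1 + 1) * u p.2 := by
    rw [selfConvolution, mul_sum, ← sum_add_distrib, Nat.sum_antidiagonal_succ, h0]
    congr 1
    · push_cast; ring
    · exact sum_congr rfl fun p _ => by push_cast; ring
  have hsymm₀ := two_mul_sum_antidiagonal_fst_mul u n
  have hsymm₁ := two_mul_sum_antidiagonal_fst_mul u (n + 1)
  have hsymm₂ := two_mul_sum_antidiagonal_fst_mul u (n + 2)
  push_cast at hsymm₁ hsymm₂
  linear_combination 2 * hA + 2 * hB - 2 * (1 + β) * hC - hsymm₂ + 2 * (1 + β) * hsymm₁ -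
    (1 - β) ^ 2 * hsymm₀

theorem succ_eq_selfConvolution_of_three_term (h0 : u 0 = 1) (h1 : u 1 = 1)
    (hrec : ∀ n : ℕ,
      (n + 3) * u (n + 2) = (2 * n + 3) * (1 + β) * u (n + 1) - n * (1 - β) ^ 2 * u n)
    (n : ℕ) : u (n + 1) = (1 - β) * u n + β * selfConvolution u n := by
  induction n using Nat.twoStepInduction with
  | zero => simp [selfConvolution, h0, h1]
  | one =>
    have h2 : u 2 = 1 + β := by linear_combination hrec 0 / 3 + (1 + β) * h1
    rw [selfConvolution, Nat.sum_antidiagonal_succ, Nat.antidiagonal_zero, sum_singleton, h0, h1,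
      h2]
    ring
  | more n ih₀ ih₁ =>
    have hconv := selfConvolution_recurrence_of_three_term h0 h1 hrec n
    have hrec₀ := hrec n
    have hrec₁ := hrec (n + 1)
    push_cast at hrec₁
    refine mul_left_cancel₀ (show (n : ℝ) + 4 ≠ 0 by positivity) ?_
    linear_combination hrec₁ - β * hconv + 2 * (1 + β) * (n + 2) * ih₁ - (1 - β) ^ 2 * n * ih₀ -
      (1 - β) * hrec₀

end ThreeTerm

noncomputable def narayanaSeq (β : ℝ) : ℕ → ℝ
  | 0 => 1
  | m + 1 => narayana (m + 1) β

theorem narayanaSeq_recurrence (β : ℝ) (n : ℕ) :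
    (n + 3) * narayanaSeq β (n + 2) =
      (2 * n + 3) * (1 + β) * narayanaSeq β (n + 1) - n * (1 - β) ^ 2 * narayanaSeq β n := by
  have h := congrArg (eval β) (narayanaPoly_recurrence n)
  simp only [eval_mul, eval_sub, eval_C, eval_add, eval_one, eval_X, eval_pow,
    eval_narayanaPoly] at h
  rcases n with _ | n
  · simpa [narayanaSeq] using h
  · simp only [narayanaSeq]
    push_cast at h ⊢
    linear_combination h

theorem narayanaSeq_succ (β : ℝ) (n : ℕ) :
    narayanaSeq β (n + 1) = (1 - β) * narayanaSeq β n + β * selfConvolution (narayanaSeq β) n :=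
  succ_eq_selfConvolution_of_three_term rfl (by simp [narayanaSeq, narayana])
    (narayanaSeq_recurrence β) n

theorem eq_div_pow_of_succ_eq_selfConvolution {β : ℝ} {u v : ℕ → ℝ} (hβ : 1 - β ≠ 0)
    (hu0 : u 0 = 1)
    (hu : ∀ n, u (n + 1) = (1 - β) * u n + β * selfConvolution u n)
    (hv1 : v 1 = 1 / (1 - β))
    (hvrec : ∀ m, 2 ≤ m →
      v m = v (m - 1) / (1 - β) + β / (1 - β) * ∑ j ∈ Finset.Ico 1 m, v j * v (m - j))
    (m : ℕ) : v (m + 1) = u m / (1 - β) ^ (2 * m + 1) := by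
  induction m using Nat.strong_induction_on with
  | _ m ih =>
    rcases m with _ | m
    · simp [hv1, hu0]
    have hsum : ∑ j ∈ Ico 1 (m + 2), v j * v (m + 2 - j) =
        selfConvolution u m / (1 - β) ^ (2 * m + 2) := by
      rw [sum_Ico_eq_sum_range, selfConvolution, Nat.sum_antidiagonal_eq_sum_range_succ_mk,
        sum_div]
      refine sum_congr rfl fun k hk => ?_
      rw [mem_range] at hk
      rw [show m + 2 - (1 + k) = m - k + 1 by omega, add_comm 1 k, ih k (by omega),
        ih (m - k) (by omega), div_mul_div_comm, ← pow_add]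
      congr 2
      omega
    rw [hvrec (m + 2) (by omega), hsum, show m + 2 - 1 = m + 1 by omega, ih m (by omega), hu]
    field_simp
    ring

/-- With `v₁ = 1/(1-β)` and `v_m = v_{m-1}/(1-β) + (β/(1-β)) ∑_{j=1}^{m-1} v_j v_{m-j}`,
we have `v_{m+1} = N_m(β)/(1-β)^{2m+1}` for all `m ≥ 1`. -/
theorem stmt2 (β : ℝ) (hβ : β ∈ Set.Ioo (0 : ℝ) 1) (v : ℕ → ℝ)
    (hv1 : v 1 = 1 / (1 - β))
    (hvrec : ∀ m, 2 ≤ m →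
      v m = v (m - 1) / (1 - β) + β / (1 - β) * ∑ j ∈ Finset.Ico 1 m, v j * v (m - j)) :
    ∀ m, 1 ≤ m → v (m + 1) = narayana m β / (1 - β) ^ (2 * m + 1) := by
  intro m hm
  obtain ⟨k, rfl⟩ := Nat.exists_eq_add_of_le' hm
  exact eq_div_pow_of_succ_eq_selfConvolution (sub_pos.2 hβ.2).ne' rfl (narayanaSeq_succ β) hv1
    hvrec (k + 1)
end

section
/- Let β ∈ (0,1). The sequence defined by v₁^{(n)} = Σ_{b=0}^{n-1} β^b and the recursion v_m^{(n)} = v_{m-1}^{(n)} + β Σ_{j=1}^{m-1} v_j^{(n-1)} v_{m-j}^{(n)} + β v_m^{(n-1)} for m ≥ 2 (with v_m^{(0)} = 0) is, for each fixed m, nondecreasing in n and bounded above, hence converges to a limit v_m^{(∞)} satisfying v_1^{(∞)} = 1/(1−β) and v_m^{(∞)} = v_{m-1}^{(∞)}/(1−β) + (β/(1−β)) Σ_{j=1}^{m-1} v_j^{(∞)} v_{m-j}^{(∞)}. -/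
open Finset Filter

noncomputable def Wb (β : ℝ) : ℕ → ℝ
  | 0 => 0
  | 1 => 1 / (1 - β)
  | m + 2 =>
    (Wb β (m + 1) + β * ∑ j ∈ (Finset.Ico 1 (m + 2)).attach,
        Wb β j.1 * Wb β (m + 2 - j.1)) / (1 - β)
decreasing_by
  · omega
  · have := Finset.mem_Ico.mp j.2; omega
  · have := Finset.mem_Ico.mp j.2; omega

lemma Wb_succ (β : ℝ) (m : ℕ) : Wb β (m+2) =
    (Wb β (m+1) + β * ∑ j ∈ Finset.Ico 1 (m+2), Wb β j * Wb β (m+2-j)) / (1-β) := by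
  rw [Wb, ← Finset.sum_attach (Finset.Ico 1 (m+2)) (fun j => Wb β j * Wb β (m+2-j))]

lemma Wb_nonneg {β : ℝ} (h0 : 0 < β) (h1 : β < 1) : ∀ m, 0 ≤ Wb β m := by
  intro m
  induction m using Nat.strong_induction_on with
  | _ m ih =>
    match m with
    | 0 => simp [Wb]
    | 1 =>
      rw [Wb]
      exact div_nonneg zero_le_one (by linarith)
    | m + 2 =>
      rw [Wb_succ]
      apply div_nonneg _ (by linarith)
      have hs : 0 ≤ ∑ j ∈ Finset.Ico 1 (m+2), Wb β j * Wb β (m+2-j) := by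
        apply Finset.sum_nonneg
        intro j hj
        have hj' := Finset.mem_Ico.mp hj
        exact mul_nonneg (ih j (by omega)) (ih (m+2-j) (by omega))
      have := ih (m+1) (by omega)
      positivity
/-- The principal-iteration coefficients `v_m^{(n)}` (with `v₁^{(n)} = ∑_{b<n} β^b`,
`v_m^{(0)} = 0`, and `v_m^{(n)} = v_{m-1}^{(n)} + β ∑_{j=1}^{m-1} v_j^{(n-1)} v_{m-j}^{(n)}
+ β v_m^{(n-1)}` for `m ≥ 2`, `n ≥ 1`) are, for each fixed `m ≥ 1`, nondecreasing in `n`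
and bounded above, hence convergent to limits `V m` satisfying `V 1 = 1/(1−β)` and
`V m = V (m−1)/(1−β) + (β/(1−β)) ∑_{j=1}^{m-1} V j · V (m−j)`. -/
theorem stmt14 (β : ℝ) (hβ : β ∈ Set.Ioo (0 : ℝ) 1) (v : ℕ → ℕ → ℝ)
    (h1 : ∀ n, v 1 n = ∑ b ∈ Finset.range n, β ^ b)
    (h0 : ∀ m, v m 0 = 0)
    (hrec : ∀ m, 2 ≤ m → ∀ n, 1 ≤ n →
      v m n = v (m - 1) n + β * ∑ j ∈ Finset.Ico 1 m, v j (n - 1) * v (m - j) n +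
        β * v m (n - 1)) :
    ∃ V : ℕ → ℝ,
      (∀ m, 1 ≤ m →
        Monotone (fun n => v m n) ∧ BddAbove (Set.range fun n => v m n) ∧
        Tendsto (fun n => v m n) atTop (nhds (V m))) ∧
      V 1 = 1 / (1 - β) ∧
      (∀ m, 2 ≤ m →
        V m = V (m - 1) / (1 - β) + β / (1 - β) * ∑ j ∈ Finset.Ico 1 m, V j * V (m - j)) := by
  obtain ⟨hb0, hb1⟩ := hβ
  have h1β : 0 < 1 - β := by linarith
  -- key simultaneous induction
  have key : ∀ m, 1 ≤ m →
      (∀ n, 0 ≤ v m n) ∧ (∀ n, v m n ≤ v m (n+1)) ∧ (∀ n, v m n ≤ Wb β m) := by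
    intro m
    induction m using Nat.strong_induction_on with
    | _ m ih =>
      intro hm1
      rcases eq_or_lt_of_le hm1 with h | hm2
      · -- m = 1
        subst h
        have nn : ∀ n, 0 ≤ v 1 n := by
          intro n; rw [h1]; positivity
        have mono : ∀ n, v 1 n ≤ v 1 (n+1) := by
          intro n
          rw [h1, h1, Finset.sum_range_succ]
          have : (0:ℝ) ≤ β ^ n := by positivity
          linarith
        refine ⟨nn, mono, fun n => ?_⟩
        rw [h1]
        have hg := geom_sum_mul β n
        have hp : (0:ℝ) ≤ β ^ n := by positivity
        have hWb1 : Wb β 1 = 1 / (1 - β) := by rw [Wb]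
        rw [hWb1, le_div_iff₀ h1β]
        nlinarith
      · -- 2 ≤ m
        have hm2 : 2 ≤ m := hm2
        have hrecn : ∀ n, v m (n+1) = v (m-1) (n+1) +
            β * ∑ j ∈ Finset.Ico 1 m, v j n * v (m-j) (n+1) + β * v m n := by
          intro n
          have := hrec m hm2 (n+1) (by omega)
          simpa using this
        have nn : ∀ n, 0 ≤ v m n := by
          intro n
          induction n with
          | zero => rw [h0]
          | succ n ihn =>
            rw [hrecn n]
            have hA : 0 ≤ v (m-1) (n+1) := (ih (m-1) (by omega) (by omega)).1 (n+1)
            have hS : 0 ≤ ∑ j ∈ Finset.Ico 1 m, v j n * v (m-j) (n+1) := by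
              apply Finset.sum_nonneg
              intro j hj
              have hj' := Finset.mem_Ico.mp hj
              exact mul_nonneg ((ih j (by omega) (by omega)).1 n)
                ((ih (m-j) (by omega) (by omega)).1 (n+1))
            positivity
        have mono : ∀ n, v m n ≤ v m (n+1) := by
          intro n
          induction n with
          | zero => rw [h0]; exact nn 1
          | succ n ihn =>
            rw [hrecn n, hrecn (n+1)]
            gcongr with j hj <;>
              first
              | exact (ih (m-1) (by omega) (by omega)).2.1 (n+1)
              | exact ihn
              | (have hj' := Finset.mem_Ico.mp hj
                 first
                 | exact (ih j (by omega) (by omega)).1 (n+1)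
                 | exact (ih (m-j) (by omega) (by omega)).1 (n+1)
                 | exact (ih j (by omega) (by omega)).2.1 n
                 | exact (ih (m-j) (by omega) (by omega)).2.1 (n+1))
        have bdd : ∀ n, v m n ≤ Wb β m := by
          intro n
          induction n with
          | zero => rw [h0]; exact Wb_nonneg hb0 hb1 m
          | succ n ihn =>
            rw [hrecn n]
            have hA : v (m-1) (n+1) ≤ Wb β (m-1) := (ih (m-1) (by omega) (by omega)).2.2 (n+1)
            have hS : ∑ j ∈ Finset.Ico 1 m, v j n * v (m-j) (n+1) ≤
                ∑ j ∈ Finset.Ico 1 m, Wb β j * Wb β (m-j) := by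
              apply Finset.sum_le_sum
              intro j hj
              have hj' := Finset.mem_Ico.mp hj
              apply mul_le_mul ((ih j (by omega) (by omega)).2.2 n)
                ((ih (m-j) (by omega) (by omega)).2.2 (n+1))
                ((ih (m-j) (by omega) (by omega)).1 (n+1))
                (Wb_nonneg hb0 hb1 j)
            have hrw : Wb β m = (Wb β (m-1) + β * ∑ j ∈ Finset.Ico 1 m, Wb β j * Wb β (m-j)) / (1-β) := by
              obtain ⟨k, rfl⟩ : ∃ k, m = k + 2 := ⟨m - 2, by omega⟩
              simpa using Wb_succ β k
            have hWm : (1-β) * Wb β m = Wb β (m-1) + β * ∑ j ∈ Finset.Ico 1 m, Wb β j * Wb β (m-j) := by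
              rw [hrw]; field_simp
            nlinarith [ihn, hS, hA]
        exact ⟨nn, mono, bdd⟩
  set V : ℕ → ℝ := fun m => ⨆ n, v m n with hV
  have conv : ∀ m, 1 ≤ m →
      Monotone (fun n => v m n) ∧ BddAbove (Set.range fun n => v m n) ∧
      Tendsto (fun n => v m n) atTop (nhds (V m)) := by
    intro m hm
    obtain ⟨nn, mono, bdd⟩ := key m hm
    have hmono : Monotone (fun n => v m n) := monotone_nat_of_le_succ mono
    have hbdd : BddAbove (Set.range fun n => v m n) := by
      refine ⟨Wb β m, ?_⟩
      rintro x ⟨n, rfl⟩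
      exact bdd n
    exact ⟨hmono, hbdd, tendsto_atTop_ciSup hmono hbdd⟩
  refine ⟨V, conv, ?_, ?_⟩
  · have hT := (conv 1 le_rfl).2.2
    have hG : Tendsto (fun n => v 1 n) atTop (nhds (1 / (1 - β))) := by
      have := (hasSum_geometric_of_lt_one hb0.le hb1).tendsto_sum_nat
      rw [one_div]
      simpa [h1] using this
    exact tendsto_nhds_unique hT hG
  · intro m hm2
    have hrecn : ∀ n, v m (n+1) = v (m-1) (n+1) +
        β * ∑ j ∈ Finset.Ico 1 m, v j n * v (m-j) (n+1) + β * v m n := by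
      intro n
      have := hrec m hm2 (n+1) (by omega)
      simpa using this
    have shift : Tendsto (fun n : ℕ => n + 1) atTop atTop := tendsto_add_atTop_nat 1
    have hTm := (conv m (by omega)).2.2
    have hL : Tendsto (fun n => v m (n+1)) atTop (nhds (V m)) := hTm.comp shift
    have hR : Tendsto (fun n => v (m-1) (n+1) +
        β * ∑ j ∈ Finset.Ico 1 m, v j n * v (m-j) (n+1) + β * v m n) atTop
        (nhds (V (m-1) + β * ∑ j ∈ Finset.Ico 1 m, V j * V (m-j) + β * V m)) := by
      refine Tendsto.add (Tendsto.add (((conv (m-1) (by omega)).2.2).comp shift) ?_)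
        (tendsto_const_nhds.mul hTm)
      refine tendsto_const_nhds.mul (tendsto_finset_sum _ fun j hj => ?_)
      have hj' := Finset.mem_Ico.mp hj
      exact ((conv j (by omega)).2.2).mul (((conv (m-j) (by omega)).2.2).comp shift)
    have heq : V m = V (m-1) + β * ∑ j ∈ Finset.Ico 1 m, V j * V (m-j) + β * V m := by
      refine tendsto_nhds_unique hL ?_
      have : (fun n => v m (n+1)) = fun n => v (m-1) (n+1) +
          β * ∑ j ∈ Finset.Ico 1 m, v j n * v (m-j) (n+1) + β * v m n := funext hrecn
      rw [this]
      exact hR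
    have hne : (1 - β) ≠ 0 := ne_of_gt h1β
    field_simp
    linarith [heq]
end

section
/- Let β ∈ (0,1) and let g_β(x) = (1−β−x−√((1−β−x)²−4βx))/(2βx). Then the formal power series identity holds: Σ_{k≥0} z̄_{k+1} x^k = (1/x) ln((1 + β − x + √((1−β−x)² − 4βx))/2), where z̄_m = Σ_{l=1}^m ((−1)^{l+1}/l) Σ_{k_1+⋯+k_l = m, k_i ≥ 1} p_{k_1}⋯p_{k_l}, with p_1 = −1/(1−β) and p_k = −β v_k^{(∞)} for k ≥ 2 (v_k^{(∞)} the coefficients of g_β, i.e., g_β(x) = Σ_{m≥0} v_{m+1}^{(∞)} x^m). -/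
/-!
Put `p(x) = ∑_{k≥1} p_k x^k`. The sum over compositions of `m` into `l` positive parts is the
coefficient of `x^m` in `p(x)^l`, so `∑ z̄_m x^m` is `log (1 + p) = ∑_l (-1)^(l+1) p^l / l`
expanded and regrouped by powers of `x`; for small `x` the double series converges absolutely,
which justifies the regrouping. Since `g_β` solves `β x g² - (1 - β - x) g + 1 = 0`, letting
`x → 0` gives `v₁ = 1 / (1 - β)`, i.e. `p_1 = -1 - β v₁`. Hence
`1 + p(x) = 1 - x - β x g_β(x) = (1 + β - x + √((1-β-x)² - 4βx)) / 2`, and dividing by `x`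
shifts the index.
-/

open Finset Filter Topology

theorem hasSum_prod_tuple {ι : Type*} {h : ι → ℝ} (hh : Summable h) (l : ℕ) :
    HasSum (fun c : Fin l → ι => ∏ i, h (c i)) ((∑' k, h k) ^ l) := by
  induction l with
  | zero => simp
  | succ l ih =>
    have hprod := hh.hasSum.mul ih <|
      summable_mul_of_summable_norm (f := h) (g := fun c : Fin l → ι => ∏ i, h (c i))
        hh.norm ih.summable.norm
    have hcons : (fun c : Fin (l + 1) → ι => ∏ i, h (c i)) =
        (fun p : ι × (Fin l → ι) => h p.1 * ∏ i, h (p.2 i)) ∘ (Fin.consEquiv fun _ => ι).symm := by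
      ext c
      simp [Fin.consEquiv, Fin.prod_univ_succ, Fin.tail]
    rw [hcons, Equiv.hasSum_iff, pow_succ']
    exact hprod

theorem hasSum_sum_antidiagonalTuple_prod {h : ℕ → ℝ} (hh : Summable h) (l : ℕ) :
    HasSum (fun m => ∑ c ∈ Nat.antidiagonalTuple l m, ∏ i, h (c i)) ((∑' k, h k) ^ l) :=
  ((Nat.sigmaAntidiagonalTupleEquivTuple l).hasSum_iff.2 (hasSum_prod_tuple hh l)).sigma
    fun m => (Nat.antidiagonalTuple l m).hasSum fun c => ∏ i, h (c i)

theorem sum_antidiagonalTuple_prod_eq_zero {h : ℕ → ℝ} (h0 : h 0 = 0) {l m : ℕ} (hml : m < l) :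
    ∑ c ∈ Nat.antidiagonalTuple l m, ∏ i, h (c i) = 0 := by
  refine sum_eq_zero fun c hc => ?_
  obtain ⟨i, hi⟩ : ∃ i, c i = 0 := by
    by_contra! hpos
    have : ∑ _i : Fin l, 1 ≤ ∑ i, c i := sum_le_sum fun i _ => Nat.one_le_iff_ne_zero.2 (hpos i)
    simp [Nat.mem_antidiagonalTuple.1 hc] at this
    omega
  exact prod_eq_zero (mem_univ i) (by rw [hi, h0])

theorem sum_antidiagonalTuple_prod_mul_pow (p : ℕ → ℝ) (x : ℝ) (l m : ℕ) :
    ∑ c ∈ Nat.antidiagonalTuple l m, ∏ i, (if c i = 0 then 0 else p (c i) * x ^ c i) =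
      (∑ c ∈ (Nat.antidiagonalTuple l m).filter (fun c => ∀ i, 0 < c i), ∏ i, p (c i)) * x ^ m := by
  rw [sum_mul, sum_filter]
  refine sum_congr rfl fun c hc => ?_
  split_ifs with hpos
  · rw [prod_congr rfl fun i _ => if_neg (hpos i).ne', prod_mul_distrib, prod_pow_eq_pow_sum,
      Nat.mem_antidiagonalTuple.1 hc]
  · obtain ⟨i, hi⟩ := not_forall.1 hpos
    exact prod_eq_zero (mem_univ i) (if_pos (Nat.eq_zero_of_not_pos hi))

theorem summable_uncurry_sum_antidiagonalTuple_prod_abs {h : ℕ → ℝ} (hs : Summable h)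
    (hlt : ∑' k, |h k| < 1) :
    Summable fun p : ℕ × ℕ => ∑ c ∈ Nat.antidiagonalTuple p.1 p.2, ∏ i, |h (c i)| := by
  have hrow := hasSum_sum_antidiagonalTuple_prod hs.abs
  refine (summable_prod_of_nonneg fun p => by positivity).2 ⟨fun l => (hrow l).summable, ?_⟩
  simp_rw [fun l => (hrow l).tsum_eq]
  exact summable_geometric_of_lt_one (tsum_nonneg fun k => abs_nonneg _) hlt

theorem Real.hasSum_taylorSeries_log {x : ℝ} (hx : |x| < 1) :
    HasSum (fun n : ℕ => (-1) ^ (n + 1) / n * x ^ n) (Real.log (1 + x)) := by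
  have h := (Real.hasSum_pow_div_log_of_abs_lt_one (x := -x) (by rwa [abs_neg])).neg
  rw [neg_neg, sub_neg_eq_add] at h
  rw [← hasSum_nat_add_iff' 1]
  convert h using 1
  · ext n
    push_cast
    rw [neg_pow, pow_succ (-1 : ℝ) (n + 1)]
    ring
  · simp

theorem hasSum_log_one_add_tsum {h : ℕ → ℝ} (h0 : h 0 = 0) (hs : Summable h)
    (hlt : ∑' k, |h k| < 1) :
    HasSum (fun m => ∑ l ∈ Icc 1 m,
        (-1) ^ (l + 1) / l * ∑ c ∈ Nat.antidiagonalTuple l m, ∏ i, h (c i))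
      (Real.log (1 + ∑' k, h k)) := by
  set t : ℕ × ℕ → ℝ := fun p =>
    (-1) ^ (p.1 + 1) / p.1 * ∑ c ∈ Nat.antidiagonalTuple p.1 p.2, ∏ i, h (c i)
  have ht : Summable t := by
    refine (summable_uncurry_sum_antidiagonalTuple_prod_abs hs hlt).of_norm_bounded fun p => ?_
    rw [Real.norm_eq_abs, abs_mul]
    refine (mul_le_of_le_one_left (abs_nonneg _) ?_).trans ?_
    · simpa [abs_div] using Nat.cast_inv_le_one (α := ℝ) p.1
    · exact (abs_sum_le_sum_abs _ _).trans_eq (sum_congr rfl fun c _ => abs_prod _ _)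
  have hS : |∑' k, h k| < 1 := by
    refine lt_of_le_of_lt ?_ hlt
    simpa only [Real.norm_eq_abs] using norm_tsum_le_tsum_norm hs.norm
  have hrows : HasSum (fun l : ℕ => (-1) ^ (l + 1) / l * (∑' k, h k) ^ l) (∑' p, t p) :=
    ht.hasSum.prod_fiberwise fun l => (hasSum_sum_antidiagonalTuple_prod hs l).mul_left _
  rw [(Real.hasSum_taylorSeries_log hS).unique hrows]
  refine ((Equiv.prodComm ℕ ℕ).hasSum_iff.2 ht.hasSum).prod_fiberwise fun m =>
    hasSum_sum_of_ne_finset_zero fun l hl => ?_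
  obtain rfl | hl1 := Nat.eq_zero_or_pos l
  · simp [t] -- the `l = 0` row vanishes only because `(-1) / (0 : ℝ) = 0`
  · simp [t, sum_antidiagonalTuple_prod_eq_zero h0 (show m < l by simp at hl; omega)]

theorem hasSum_log_one_add_powerSeries {p : ℕ → ℝ} {x : ℝ}
    (hs : Summable fun k => p (k + 1) * x ^ (k + 1))
    (hlt : ∑' k, |p (k + 1) * x ^ (k + 1)| < 1) :
    HasSum (fun m => (∑ l ∈ Icc 1 m, (-1) ^ (l + 1) / l *
        ∑ c ∈ (Nat.antidiagonalTuple l m).filter (fun c => ∀ i, 0 < c i), ∏ i, p (c i)) * x ^ m)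
      (Real.log (1 + ∑' k, p (k + 1) * x ^ (k + 1))) := by
  set h : ℕ → ℝ := fun k => if k = 0 then 0 else p k * x ^ k
  have hs' : Summable h := (summable_nat_add_iff 1).1 hs
  have htsum : ∑' k, h k = ∑' k, p (k + 1) * x ^ (k + 1) := by
    simp [h, hs'.tsum_eq_zero_add]
  have htsum_abs : ∑' k, |h k| = ∑' k, |p (k + 1) * x ^ (k + 1)| := by
    simp [h, hs'.abs.tsum_eq_zero_add]
  have := hasSum_log_one_add_tsum (h := h) (by simp [h]) hs' (htsum_abs ▸ hlt)
  simp only [h, sum_antidiagonalTuple_prod_mul_pow, ← mul_assoc, ← sum_mul] at this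
  rwa [← htsum]

theorem continuousAt_tsum_mul_pow {c : ℕ → ℝ} {r : ℝ} (hr : r ≠ 0)
    (hc : Summable fun k => c k * r ^ k) : ContinuousAt (fun x => ∑' k, c k * x ^ k) 0 := by
  refine (continuousOn_tsum (s := Metric.closedBall 0 |r|) (fun k => by fun_prop) hc.abs
    fun k x hx => ?_).continuousAt (Metric.closedBall_mem_nhds _ (abs_pos.2 hr))
  rw [mem_closedBall_zero_iff, Real.norm_eq_abs] at hx
  rw [Real.norm_eq_abs, abs_mul, abs_mul, abs_pow, abs_pow]
  gcongr

theorem tendsto_tsum_abs_mul_pow_succ {c : ℕ → ℝ} {r : ℝ} (hr : r ≠ 0)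
    (hc : Summable fun k => c k * r ^ (k + 1)) :
    Tendsto (fun x => ∑' k, |c k * x ^ (k + 1)|) (𝓝 0) (𝓝 0) := by
  have habs : Summable fun k => |c k| * |r| ^ k := by
    refine (summable_mul_left_iff (abs_ne_zero.2 hr)).1 ?_
    simpa [abs_mul, abs_pow, pow_succ, mul_comm, mul_left_comm] using hc.abs
  have hcont := (continuousAt_tsum_mul_pow (abs_ne_zero.2 hr) habs).tendsto.comp
    (continuous_abs.tendsto' 0 0 abs_zero)
  have := (continuous_abs.tendsto' 0 0 abs_zero).mul hcont
  rw [zero_mul] at this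
  refine this.congr fun x => ?_
  simp only [Function.comp_apply, ← tsum_mul_left, abs_mul, abs_pow, pow_succ]
  congr 1; ext k; ring

theorem hasSum_coeff_succ_mul_pow {a : ℕ → ℝ} {x s : ℝ} (hx : x ≠ 0) (ha : a 0 = 0)
    (h : HasSum (fun m => a m * x ^ m) s) : HasSum (fun k => a (k + 1) * x ^ k) (1 / x * s) := by
  have := ((hasSum_nat_add_iff' 1).2 h).div_const x
  simp only [range_one, sum_singleton, ha, zero_mul, sub_zero] at this
  have hdiv (k : ℕ) : a (k + 1) * x ^ (k + 1) / x = a (k + 1) * x ^ k := by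
    rw [pow_succ]; field_simp
  simpa only [hdiv, one_div_mul_eq_div] using this

theorem eventually_nhdsNE_zero_iff {P : ℝ → Prop} :
    (∀ᶠ x in 𝓝[≠] 0, P x) ↔ ∃ ε > 0, ∀ x : ℝ, x ≠ 0 → |x| < ε → P x := by
  simp only [eventually_nhdsWithin_iff, Metric.eventually_nhds_iff, Real.dist_eq, sub_zero,
    Set.mem_compl_singleton_iff]
  exact exists_congr fun ε => and_congr_right fun _ => forall_congr' fun x => Imp.swap

noncomputable def heavyBallGF (β x : ℝ) : ℝ :=
  (1 - β - x - Real.sqrt ((1 - β - x) ^ 2 - 4 * β * x)) / (2 * β * x)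

theorem heavyBallGF_quadratic {β x : ℝ} (hβ : β ≠ 0) (hx : x ≠ 0)
    (hD : 0 ≤ (1 - β - x) ^ 2 - 4 * β * x) :
    β * x * heavyBallGF β x ^ 2 - (1 - β - x) * heavyBallGF β x + 1 = 0 := by
  have hs := Real.sq_sqrt hD
  unfold heavyBallGF
  set s := Real.sqrt ((1 - β - x) ^ 2 - 4 * β * x)
  field_simp
  linear_combination hs

theorem one_sub_sub_mul_heavyBallGF {β x : ℝ} (hβ : β ≠ 0) (hx : x ≠ 0) :
    1 - x - β * x * heavyBallGF β x =
      (1 + β - x + Real.sqrt ((1 - β - x) ^ 2 - 4 * β * x)) / 2 := by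
  unfold heavyBallGF
  field_simp
  ring

theorem eventually_discr_nonneg {β : ℝ} (hβ : β ≠ 1) :
    ∀ᶠ x in 𝓝 0, 0 ≤ (1 - β - x) ^ 2 - 4 * β * x := by
  have hcont : Continuous fun x : ℝ => (1 - β - x) ^ 2 - 4 * β * x := by fun_prop
  have hpos : (0 : ℝ) < (1 - β - 0) ^ 2 - 4 * β * 0 := by
    simpa using sq_pos_of_ne_zero (sub_ne_zero.2 (Ne.symm hβ))
  exact (hcont.continuousAt.eventually (lt_mem_nhds hpos)).mono fun x hx => hx.le

theorem coeff_one_eq_of_hasSum_heavyBallGF {β : ℝ} (hβ0 : β ≠ 0) (hβ1 : β ≠ 1) {V : ℕ → ℝ}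
    (hV : ∀ᶠ x in 𝓝[≠] 0, HasSum (fun m => V (m + 1) * x ^ m) (heavyBallGF β x)) :
    V 1 = 1 / (1 - β) := by
  obtain ⟨r, hVr, hr⟩ := (hV.and self_mem_nhdsWithin).exists
  set F : ℝ → ℝ := fun x => ∑' m, V (m + 1) * x ^ m
  have hF : ContinuousAt F 0 := continuousAt_tsum_mul_pow hr hVr.summable
  -- `F` solves the quadratic of `heavyBallGF` off `0`, hence also at `0` by continuity.
  set Q : ℝ → ℝ := fun x => β * x * F x ^ 2 - (1 - β - x) * F x + 1
  have hQ : Tendsto Q (𝓝[≠] 0) (𝓝 (Q 0)) :=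
    (by fun_prop : ContinuousAt Q 0).tendsto.mono_left nhdsWithin_le_nhds
  have hQ0 : Q =ᶠ[𝓝[≠] 0] fun _ => 0 := by
    filter_upwards [hV, self_mem_nhdsWithin, nhdsWithin_le_nhds (eventually_discr_nonneg hβ1)]
      with x hVx hx hD
    simp only [Q, F, hVx.tsum_eq]
    exact heavyBallGF_quadratic hβ0 hx hD
  have hF0 : F 0 = V 1 := (tsum_eq_single 0 fun m hm => by simp [hm]).trans (by simp)
  have h1 : Q 0 = 0 := tendsto_nhds_unique hQ (tendsto_const_nhds.congr' hQ0.symm)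
  simp only [Q, hF0] at h1
  field_simp [sub_ne_zero.2 (Ne.symm hβ1)]
  linarith

noncomputable def heavyBallCoeff (β : ℝ) (V : ℕ → ℝ) (k : ℕ) : ℝ :=
  if k = 1 then -1 / (1 - β) else -β * V k

theorem heavyBallCoeff_succ {β : ℝ} (hβ1 : β ≠ 1) {V : ℕ → ℝ} (hV1 : V 1 = 1 / (1 - β))
    (k : ℕ) : heavyBallCoeff β V (k + 1) = -β * V (k + 1) - if k = 0 then 1 else 0 := by
  rcases k with _ | k
  · simp only [heavyBallCoeff, if_true, hV1]
    field_simp [sub_ne_zero.2 (Ne.symm hβ1)]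
    ring
  · simp [heavyBallCoeff]

theorem hasSum_heavyBallCoeff_mul_pow {β : ℝ} (hβ1 : β ≠ 1) {V : ℕ → ℝ}
    (hV1 : V 1 = 1 / (1 - β)) {x : ℝ}
    (hx : HasSum (fun m => V (m + 1) * x ^ m) (heavyBallGF β x)) :
    HasSum (fun k => heavyBallCoeff β V (k + 1) * x ^ (k + 1)) (-x - β * x * heavyBallGF β x) := by
  have hterm (k : ℕ) : heavyBallCoeff β V (k + 1) * x ^ (k + 1) =
      -β * x * (V (k + 1) * x ^ k) - if k = 0 then x else 0 := by
    rw [heavyBallCoeff_succ hβ1 hV1]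
    rcases k with _ | k
    · simp only [if_true, pow_zero]
      ring
    · simp only [Nat.add_one_ne_zero, if_false]
      ring
  simp only [hterm]
  rw [show -x - β * x * heavyBallGF β x = -β * x * heavyBallGF β x - x by ring]
  exact (hx.mul_left (-β * x)).sub (hasSum_ite_eq 0 x)

/-- Principal-flow generating function of heavy-ball momentum. If
`g_β(x) = (1−β−x−√((1−β−x)²−4βx))/(2βx) = ∑_{m≥0} v_{m+1}^{(∞)} x^m` near `0`, and
`z̄_m = ∑_{l=1}^m ((−1)^{l+1}/l) ∑_{k₁+⋯+k_l=m, k_i≥1} p_{k₁}⋯p_{k_l}` with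
`p₁ = −1/(1−β)`, `p_k = −β v_k^{(∞)}` for `k ≥ 2`, then near `0`
`∑_{k≥0} z̄_{k+1} x^k = (1/x) ln((1 + β − x + √((1−β−x)² − 4βx))/2)`. -/
theorem stmt16 (β : ℝ) (hβ : β ∈ Set.Ioo (0 : ℝ) 1) (V : ℕ → ℝ)
    (hg : ∃ ε > (0 : ℝ), ∀ x : ℝ, x ≠ 0 → |x| < ε →
      HasSum (fun m : ℕ => V (m + 1) * x ^ m)
        ((1 - β - x - Real.sqrt ((1 - β - x) ^ 2 - 4 * β * x)) / (2 * β * x))) :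
    ∃ ε > (0 : ℝ), ∀ x : ℝ, x ≠ 0 → |x| < ε →
      HasSum (fun k : ℕ =>
          (∑ l ∈ Finset.Icc 1 (k + 1), ((-1 : ℝ) ^ (l + 1) / l) *
            ∑ c ∈ (Finset.Nat.antidiagonalTuple l (k + 1)).filter (fun c => ∀ i, 0 < c i),
              ∏ i, (if c i = 1 then -1 / (1 - β) else -β * V (c i))) * x ^ k)
        ((1 / x) * Real.log ((1 + β - x + Real.sqrt ((1 - β - x) ^ 2 - 4 * β * x)) / 2)) := by
  have hβ0 : β ≠ 0 := hβ.1.ne'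
  have hβ1 : β ≠ 1 := hβ.2.ne
  rw [← eventually_nhdsNE_zero_iff] at hg ⊢
  change ∀ᶠ x in 𝓝[≠] 0, HasSum (fun m => V (m + 1) * x ^ m) (heavyBallGF β x) at hg
  have hV1 := coeff_one_eq_of_hasSum_heavyBallGF hβ0 hβ1 hg
  obtain ⟨r, hVr, hr⟩ := (hg.and self_mem_nhdsWithin).exists
  have hsmall : ∀ᶠ x in 𝓝 0, ∑' k, |heavyBallCoeff β V (k + 1) * x ^ (k + 1)| < 1 :=
    (tendsto_tsum_abs_mul_pow_succ hr (hasSum_heavyBallCoeff_mul_pow hβ1 hV1 hVr).summable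
      |>.eventually (gt_mem_nhds one_pos))
  filter_upwards [hg, nhdsWithin_le_nhds hsmall, self_mem_nhdsWithin] with x hVx hx1 hx0
  have hsum := hasSum_heavyBallCoeff_mul_pow hβ1 hV1 hVx
  have hlog := hasSum_log_one_add_powerSeries hsum.summable hx1
  rw [hsum.tsum_eq, ← add_sub_assoc, ← sub_eq_add_neg, one_sub_sub_mul_heavyBallGF hβ0 hx0] at hlog
  simpa only [heavyBallCoeff] using hasSum_coeff_succ_mul_pow hx0 (by simp) hlog
end

section
/- Let β ∈ (0,1), n ≥ 1. Define S(β) = −β Σ_{b=0}^{n-1} β^b Σ_{l'=1}^{b+1} Σ_{b'=0}^{n−l'} β^{b'} and T₁(β) = −β Σ_{b=0}^{n-1} β^b Σ_{l'=1}^{b+1} β^{b+1−l'}. Then S(β) − T₁(β) = (−2β² + 2n(1−β²)β^{n+1} + 2β^{2n+2})/((1−β)³(1+β)), which converges to −2β²/((1−β)³(1+β)) as n → ∞. -/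
open Finset Filter

lemma geomS (β : ℝ) (n : ℕ) : (1-β) * ∑ b ∈ Finset.range n, β^b = 1 - β^n := by
  induction n with
  | zero => simp
  | succ k ih => rw [Finset.sum_range_succ, mul_add, ih, pow_succ]; ring

lemma sumP (β : ℝ) (n : ℕ) : (1-β)^2 * ∑ b ∈ Finset.range n, ((b:ℝ)+1) * β^b
    = 1 - ((n:ℝ)+1)*β^n + n*β^(n+1) := by
  induction n with
  | zero => simp
  | succ k ih =>
    rw [Finset.sum_range_succ, mul_add, ih]
    push_cast
    rw [pow_succ β (k+1), pow_succ β k]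
    ring

lemma innerT (β : ℝ) (b : ℕ) :
    ∑ l' ∈ Finset.Icc 1 (b+1), β^(b+1-l') = ∑ j ∈ Finset.range (b+1), β^j := by
  apply Finset.sum_nbij' (fun l' => b+1-l') (fun j => b+1-j) <;>
    simp +contextual <;> omega

lemma stmt18_key (β : ℝ) (hβ : β ∈ Set.Ioo (0 : ℝ) 1) (n : ℕ) :
      (-β * ∑ b ∈ Finset.range n, β ^ b *
          ∑ l' ∈ Finset.Icc 1 (b + 1), ∑ b' ∈ Finset.range (n - l' + 1), β ^ b') -
        (-β * ∑ b ∈ Finset.range n, β ^ b * ∑ l' ∈ Finset.Icc 1 (b + 1), β ^ (b + 1 - l')) =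
        (-2 * β ^ 2 + 2 * n * (1 - β ^ 2) * β ^ (n + 1) + 2 * β ^ (2 * n + 2)) /
          ((1 - β) ^ 3 * (1 + β)) := by
  obtain ⟨hβ0, hβ1⟩ := hβ
  have h1β : (1:ℝ) - β ≠ 0 := by linarith
  have h1β' : (1:ℝ) + β ≠ 0 := by linarith
  have hD : ((1:ℝ)-β)^3 * (1+β) ≠ 0 := mul_ne_zero (pow_ne_zero _ h1β) h1β'
  rw [eq_div_iff hD]
  -- rewrite the T₁ inner sum
  have hBrw : ∑ b ∈ Finset.range n, β ^ b * ∑ l' ∈ Finset.Icc 1 (b + 1), β ^ (b + 1 - l')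
      = ∑ b ∈ Finset.range n, β ^ b * ∑ j ∈ Finset.range (b+1), β ^ j :=
    Finset.sum_congr rfl fun b _ => by rw [innerT]
  rw [hBrw]
  -- main per-term identity for the S sum
  have hA : (1-β) * ∑ b ∈ Finset.range n, β ^ b *
        ∑ l' ∈ Finset.Icc 1 (b + 1), ∑ b' ∈ Finset.range (n - l' + 1), β ^ b'
      = (∑ b ∈ Finset.range n, ((b:ℝ)+1) * β^b)
        - β^n * ∑ b ∈ Finset.range n, ∑ j ∈ Finset.range (b+1), β ^ j := by
    rw [Finset.mul_sum, Finset.mul_sum, ← Finset.sum_sub_distrib]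
    apply Finset.sum_congr rfl
    intro b hb
    simp only [Finset.mem_range] at hb
    have e1 : (1-β) * ∑ l' ∈ Finset.Icc 1 (b+1), ∑ b' ∈ Finset.range (n-l'+1), β^b'
        = ((b:ℝ)+1) - β^(n-b) * ∑ j ∈ Finset.range (b+1), β ^ j := by
      rw [Finset.mul_sum]
      have step : ∀ l' ∈ Finset.Icc 1 (b+1), (1-β) * ∑ b' ∈ Finset.range (n-l'+1), β^b'
          = 1 - β^(n-b) * β^(b+1-l') := by
        intro l' hl'
        simp only [Finset.mem_Icc] at hl'
        rw [geomS, ← pow_add]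
        congr 2
        omega
      rw [Finset.sum_congr rfl step, Finset.sum_sub_distrib, ← Finset.mul_sum, innerT]
      simp [Nat.card_Icc]
    have e2 : β^b * β^(n-b) = β^n := by
      rw [← pow_add]; congr 1; omega
    calc (1-β) * (β ^ b * ∑ l' ∈ Finset.Icc 1 (b+1), ∑ b' ∈ Finset.range (n-l'+1), β^b')
        = β^b * ((1-β) * ∑ l' ∈ Finset.Icc 1 (b+1), ∑ b' ∈ Finset.range (n-l'+1), β^b') := by
          ring
      _ = β^b * (((b:ℝ)+1) - β^(n-b) * ∑ j ∈ Finset.range (b+1), β ^ j) := by rw [e1]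
      _ = ((b:ℝ)+1) * β^b - (β^b * β^(n-b)) * ∑ j ∈ Finset.range (b+1), β ^ j := by ring
      _ = ((b:ℝ)+1) * β^b - β^n * ∑ j ∈ Finset.range (b+1), β ^ j := by rw [e2]
  -- scalar closed forms
  have hP := sumP β n
  have hgn := geomS β n
  have hQ : (1-β) * ∑ b ∈ Finset.range n, ∑ j ∈ Finset.range (b+1), β ^ j
      = (n:ℝ) - β * ∑ b ∈ Finset.range n, β^b := by
    rw [Finset.mul_sum]
    have step : ∀ b ∈ Finset.range n, (1-β) * ∑ j ∈ Finset.range (b+1), β ^ j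
        = 1 - β * β^b := by
      intro b _
      rw [geomS, pow_succ]; ring
    rw [Finset.sum_congr rfl step, Finset.sum_sub_distrib, ← Finset.mul_sum]
    simp
  have hS2 := geomS (β^2) n
  have hBB : (1-β) * ∑ b ∈ Finset.range n, β ^ b * ∑ j ∈ Finset.range (b+1), β ^ j
      = (∑ b ∈ Finset.range n, β^b) - β * ∑ b ∈ Finset.range n, (β^2)^b := by
    rw [Finset.mul_sum, Finset.mul_sum, ← Finset.sum_sub_distrib]
    apply Finset.sum_congr rfl
    intro b _
    have e3 : (β^2)^b = β^b * β^b := by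
      rw [← pow_mul, two_mul, pow_add]
    calc (1-β) * (β ^ b * ∑ j ∈ Finset.range (b+1), β ^ j)
        = β^b * ((1-β) * ∑ j ∈ Finset.range (b+1), β ^ j) := by ring
      _ = β^b * (1 - β^(b+1)) := by rw [geomS]
      _ = β^b - β * (β^2)^b := by rw [e3, pow_succ]; ring
  -- normalize powers
  have hpow1 : β^(n+1) = β^n * β := pow_succ β n
  have hpow2 : β^(2*n+2) = (β^n)^2 * β^2 := by
    rw [show 2*n+2 = n*2+2 by ring, pow_add, pow_mul]
  have hpow3 : (β^2)^n = (β^n)^2 := by rw [← pow_mul, ← pow_mul, mul_comm]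
  rw [hpow1, hpow2]
  rw [hpow3] at hS2
  set x := β^n with hx
  set A := ∑ b ∈ Finset.range n, β ^ b *
      ∑ l' ∈ Finset.Icc 1 (b + 1), ∑ b' ∈ Finset.range (n - l' + 1), β ^ b' with hAdef
  set B := ∑ b ∈ Finset.range n, β ^ b * ∑ j ∈ Finset.range (b+1), β ^ j with hBdef
  set P := ∑ b ∈ Finset.range n, ((b:ℝ)+1) * β^b with hPdef
  set Q := ∑ b ∈ Finset.range n, ∑ j ∈ Finset.range (b+1), β ^ j with hQdef
  set G := ∑ b ∈ Finset.range n, β^b with hGdef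
  set S2 := ∑ b ∈ Finset.range n, (β^2)^b with hS2def
  linear_combination (-β*(1-β)^2*(1+β))*hA + (β*(1-β)^2*(1+β))*hBB + (-β*(1+β))*hP
    + (β*x*(1-β)*(1+β))*hQ + (β*(1-β)*(1+β) - β^2*x*(1+β))*hgn + (-β^2*(1-β))*hS2

/-- Closed form and limit of the cross-batch coefficient: with
`S(β) = −β ∑_{b=0}^{n-1} β^b ∑_{l'=1}^{b+1} ∑_{b'=0}^{n−l'} β^{b'}` and
`T₁(β) = −β ∑_{b=0}^{n-1} β^b ∑_{l'=1}^{b+1} β^{b+1−l'}`, one has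
`S(β) − T₁(β) = (−2β² + 2n(1−β²)β^{n+1} + 2β^{2n+2})/((1−β)³(1+β))`,
which converges to `−2β²/((1−β)³(1+β))` as `n → ∞`. -/
theorem stmt18 (β : ℝ) (hβ : β ∈ Set.Ioo (0 : ℝ) 1) :
    (∀ n : ℕ, 1 ≤ n →
      (-β * ∑ b ∈ Finset.range n, β ^ b *
          ∑ l' ∈ Finset.Icc 1 (b + 1), ∑ b' ∈ Finset.range (n - l' + 1), β ^ b') -
        (-β * ∑ b ∈ Finset.range n, β ^ b * ∑ l' ∈ Finset.Icc 1 (b + 1), β ^ (b + 1 - l')) =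
        (-2 * β ^ 2 + 2 * n * (1 - β ^ 2) * β ^ (n + 1) + 2 * β ^ (2 * n + 2)) /
          ((1 - β) ^ 3 * (1 + β))) ∧
    Tendsto (fun n : ℕ =>
        (-β * ∑ b ∈ Finset.range n, β ^ b *
            ∑ l' ∈ Finset.Icc 1 (b + 1), ∑ b' ∈ Finset.range (n - l' + 1), β ^ b') -
          (-β * ∑ b ∈ Finset.range n, β ^ b * ∑ l' ∈ Finset.Icc 1 (b + 1), β ^ (b + 1 - l')))
      atTop (nhds (-2 * β ^ 2 / ((1 - β) ^ 3 * (1 + β)))) := by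
  obtain ⟨hβ0, hβ1⟩ := hβ
  refine ⟨fun n _ => stmt18_key β ⟨hβ0, hβ1⟩ n, ?_⟩
  have heq : (fun n : ℕ =>
        (-β * ∑ b ∈ Finset.range n, β ^ b *
            ∑ l' ∈ Finset.Icc 1 (b + 1), ∑ b' ∈ Finset.range (n - l' + 1), β ^ b') -
          (-β * ∑ b ∈ Finset.range n, β ^ b * ∑ l' ∈ Finset.Icc 1 (b + 1), β ^ (b + 1 - l')))
      = fun n : ℕ =>
        (-2 * β ^ 2 + 2 * n * (1 - β ^ 2) * β ^ (n + 1) + 2 * β ^ (2 * n + 2)) /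
          ((1 - β) ^ 3 * (1 + β)) :=
    funext fun n => stmt18_key β ⟨hβ0, hβ1⟩ n
  rw [heq]
  have t1 : Tendsto (fun n : ℕ => 2 * (n:ℝ) * (1 - β ^ 2) * β ^ (n + 1)) atTop (nhds 0) := by
    have h := (tendsto_self_mul_const_pow_of_lt_one hβ0.le hβ1).const_mul
      (2 * (1 - β ^ 2) * β)
    rw [mul_zero] at h
    refine h.congr fun n => ?_
    rw [pow_succ]
    ring
  have t2 : Tendsto (fun n : ℕ => 2 * β ^ (2 * n + 2)) atTop (nhds 0) := by
    have hb2 : β ^ 2 < 1 := by nlinarith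
    have h := (tendsto_pow_atTop_nhds_zero_of_lt_one (by positivity) hb2).const_mul
      (2 * β ^ 2)
    rw [mul_zero] at h
    refine h.congr fun n => ?_
    rw [show 2*n+2 = 2+2*n by ring, pow_add, pow_mul]
    ring
  have tnum : Tendsto (fun n : ℕ =>
      -2 * β ^ 2 + 2 * n * (1 - β ^ 2) * β ^ (n + 1) + 2 * β ^ (2 * n + 2)) atTop
      (nhds (-2 * β ^ 2)) := by
    have := (tendsto_const_nhds (x := (-2 * β ^ 2 : ℝ)) (f := atTop (α := ℕ))).add
      (t1.add t2)
    simpa [add_assoc] using this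
  exact tnum.div_const _
end

section
/- Let N ≥ 2, let ℓ_1, ..., ℓ_N : ℝ^d → ℝ be C² functions with average L = (1/N)Σ_p ℓ_p, and let π be a uniformly random permutation of {1,...,N}. Then E_π[∇²(ℓ_{π(1)} − L)(θ) ∇(ℓ_{π(2)} − L)(θ)] = −∇(tr Σ)(θ)/(2(N−1)) and E_π[∇²(ℓ_{π(1)} − L)(θ) ∇(ℓ_{π(1)} − L)(θ)] = ∇(tr Σ)(θ)/2, where Σ(θ) is the empirical covariance matrix with entries Σ_{ij} = (1/N) Σ_p ∂_i(ℓ_p − L) ∂_j(ℓ_p − L). -/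
open Finset

/-- Partial derivative in direction `j`. -/
noncomputable def pd {d : ℕ} (f : (Fin d → ℝ) → ℝ) (j : Fin d) (x : Fin d → ℝ) : ℝ :=
  fderiv ℝ f x (Pi.single j 1)

/-!
Let `G_p = ℓ_p − L` and `g p q = ⟨∂_i ∇G_p(θ), ∇G_q(θ)⟩`. Since `∑_q G_q = 0`, every row of `g`
sums to zero, while `∂_i tr Σ(θ) = (2/N) ∑_p g p p`. Under a uniform permutation, `(π a, π a)` is
a uniform diagonal entry of `g`, and for `b ≠ a` the pair `(π a, π b)` is a uniform off-diagonal
entry; the off-diagonal entries total `−∑_p g p p`.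
-/

namespace Equiv.Perm

variable {α M : Type*} [Fintype α] [DecidableEq α] [AddCommMonoid M]

theorem sum_comp_apply_eq (f : α → M) (a b : α) :
    ∑ π : Perm α, f (π a) = ∑ π : Perm α, f (π b) := by
  rw [← Equiv.sum_comp (Equiv.mulRight (swap a b)) fun π => f (π a)]
  simp only [coe_mulRight, mul_apply, swap_apply_left]

theorem sum_comp_apply_apply_eq (g : α → α → M) {a b c : α} (hb : b ≠ a) (hc : c ≠ a) :
    ∑ π : Perm α, g (π a) (π c) = ∑ π : Perm α, g (π a) (π b) := by
  rw [← Equiv.sum_comp (Equiv.mulRight (swap c b)) fun π => g (π a) (π c)]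
  simp only [coe_mulRight, mul_apply, swap_apply_left, swap_apply_of_ne_of_ne hc.symm hb.symm]

theorem card_smul_sum_comp_apply (f : α → M) (a : α) :
    Fintype.card α • ∑ π : Perm α, f (π a) = (Fintype.card α).factorial • ∑ x, f x := by
  calc Fintype.card α • ∑ π : Perm α, f (π a)
      = ∑ b : α, ∑ π : Perm α, f (π b) := by
        rw [← card_univ, ← sum_const]
        exact sum_congr rfl fun b _ => sum_comp_apply_eq f a b
    _ = ∑ π : Perm α, ∑ x, f x := by
        rw [sum_comm]
        exact sum_congr rfl fun π _ => Equiv.sum_comp π f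
    _ = (Fintype.card α).factorial • ∑ x, f x := by
        rw [sum_const, card_univ, Fintype.card_perm]

theorem card_sub_one_smul_sum_comp_apply_apply (g : α → α → M) {a b : α} (hb : b ≠ a) :
    (Fintype.card α - 1) • ∑ π : Perm α, g (π a) (π b) + ∑ π : Perm α, g (π a) (π a) =
      ∑ π : Perm α, ∑ c, g (π a) c := by
  calc (Fintype.card α - 1) • ∑ π : Perm α, g (π a) (π b) + ∑ π : Perm α, g (π a) (π a)
      = ∑ c ∈ univ.erase a, ∑ π : Perm α, g (π a) (π c) + ∑ π : Perm α, g (π a) (π a) := by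
        rw [sum_congr rfl fun c hc => sum_comp_apply_apply_eq g hb (ne_of_mem_erase hc),
          sum_const, card_erase_of_mem (mem_univ a), card_univ]
    _ = ∑ π : Perm α, ∑ c, g (π a) (π c) := by
        rw [sum_erase_add _ _ (mem_univ a), sum_comm]
    _ = ∑ π : Perm α, ∑ c, g (π a) c :=
        sum_congr rfl fun π _ => Equiv.sum_comp π (g (π a))

end Equiv.Perm

section PartialDerivatives

variable {d : ℕ}

theorem ContDiff.pd {f : (Fin d → ℝ) → ℝ} {m n : WithTop ℕ∞} (hf : ContDiff ℝ n f)
    (hmn : m + 1 ≤ n) (j : Fin d) : ContDiff ℝ m (pd f j) :=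
  (hf.fderiv_right hmn).clm_apply contDiff_const

theorem pd_const_mul {f : (Fin d → ℝ) → ℝ} {x : Fin d → ℝ} (hf : DifferentiableAt ℝ f x)
    (c : ℝ) (j : Fin d) : pd (fun y => c * f y) j x = c * pd f j x := by
  simp only [pd, fderiv_const_mul hf, _root_.smul_apply, smul_eq_mul]

theorem pd_pow_two {f : (Fin d → ℝ) → ℝ} {x : Fin d → ℝ} (hf : DifferentiableAt ℝ f x)
    (j : Fin d) : pd (fun y => f y ^ 2) j x = 2 * f x * pd f j x := by
  simp only [pd, fderiv_fun_pow 2 hf, _root_.smul_apply, smul_eq_mul]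
  norm_num

theorem pd_sum {ι : Type*} {s : Finset ι} {G : ι → (Fin d → ℝ) → ℝ} {x : Fin d → ℝ}
    (hG : ∀ p ∈ s, DifferentiableAt ℝ (G p) x) (j : Fin d) :
    pd (fun y => ∑ p ∈ s, G p y) j x = ∑ p ∈ s, pd (G p) j x := by
  simp only [pd, fderiv_fun_sum hG, _root_.sum_apply]

theorem sum_pd_eq_zero {ι : Type*} {s : Finset ι} {G : ι → (Fin d → ℝ) → ℝ}
    (hG : ∀ p ∈ s, Differentiable ℝ (G p)) (hsum : ∀ y, ∑ p ∈ s, G p y = 0)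
    (j : Fin d) (x : Fin d → ℝ) : ∑ p ∈ s, pd (G p) j x = 0 := by
  rw [← pd_sum fun p hp => (hG p hp).differentiableAt, funext hsum]
  simp [pd]

theorem pd_const_mul_sum_sum_pd_sq {ι : Type*} (s : Finset ι) {G : ι → (Fin d → ℝ) → ℝ}
    (hG : ∀ p ∈ s, ContDiff ℝ 2 (G p)) (c : ℝ) (i : Fin d) (θ : Fin d → ℝ) :
    pd (fun x => c * ∑ p ∈ s, ∑ j, pd (G p) j x ^ 2) i θ =
      2 * c * ∑ p ∈ s, ∑ j, pd (pd (G p) j) i θ * pd (G p) j θ := by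
  have hdiff : ∀ p ∈ s, ∀ j, Differentiable ℝ (pd (G p) j) := fun p hp j =>
    ((hG p hp).pd (by norm_num) j).differentiable one_ne_zero
  have hsq : ∀ p ∈ s, ∀ j, DifferentiableAt ℝ (fun x => pd (G p) j x ^ 2) θ :=
    fun p hp j => ((hdiff p hp j) θ).pow 2
  rw [pd_const_mul (DifferentiableAt.fun_sum fun p hp =>
      DifferentiableAt.fun_sum fun j _ => hsq p hp j),
    pd_sum fun p hp => DifferentiableAt.fun_sum fun j _ => hsq p hp j]
  simp only [mul_sum]
  refine sum_congr rfl fun p hp => ?_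
  rw [pd_sum fun j _ => hsq p hp j, mul_sum]
  refine sum_congr rfl fun j _ => ?_
  rw [pd_pow_two ((hdiff p hp j) θ)]
  ring

end PartialDerivatives

theorem sum_perm_pd_pd_mul_pd {d N : ℕ} {G : Fin N → (Fin d → ℝ) → ℝ}
    (hG : ∀ p, ContDiff ℝ 2 (G p)) (hsum : ∀ y, ∑ p, G p y = 0) (θ : Fin d → ℝ) (i : Fin d)
    {a b : Fin N} (hba : b ≠ a) :
    (1 / (N.factorial : ℝ)) * ∑ π : Equiv.Perm (Fin N), ∑ j,
        pd (pd (G (π a)) j) i θ * pd (G (π b)) j θ =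
      -pd (fun x => (1 / (N : ℝ)) * ∑ p, ∑ j, pd (G p) j x ^ 2) i θ / (2 * ((N : ℝ) - 1)) ∧
    (1 / (N.factorial : ℝ)) * ∑ π : Equiv.Perm (Fin N), ∑ j,
        pd (pd (G (π a)) j) i θ * pd (G (π a)) j θ =
      pd (fun x => (1 / (N : ℝ)) * ∑ p, ∑ j, pd (G p) j x ^ 2) i θ / 2 := by
  set g : Fin N → Fin N → ℝ := fun p q => ∑ j, pd (pd (G p) j) i θ * pd (G q) j θ
  have hrow : ∀ p, ∑ q, g p q = 0 := fun p => by
    simp only [g]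
    rw [sum_comm]
    refine sum_eq_zero fun j _ => ?_
    rw [← mul_sum, sum_pd_eq_zero (fun q _ => (hG q).differentiable two_ne_zero) hsum
      j θ, mul_zero]
  have hN : 1 < N := by
    have := Fin.val_ne_of_ne hba
    omega
  have hdiag : (N : ℝ) * ∑ π : Equiv.Perm (Fin N), g (π a) (π a) = N.factorial * ∑ p, g p p := by
    simpa [nsmul_eq_mul] using Equiv.Perm.card_smul_sum_comp_apply (fun p => g p p) a
  have hoff : ((N : ℝ) - 1) * ∑ π : Equiv.Perm (Fin N), g (π a) (π b) +
      ∑ π : Equiv.Perm (Fin N), g (π a) (π a) = 0 := by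
    simpa [hrow, nsmul_eq_mul, Nat.cast_sub hN.le] using
      Equiv.Perm.card_sub_one_smul_sum_comp_apply_apply g hba
  have htrace : pd (fun x => (1 / (N : ℝ)) * ∑ p, ∑ j, pd (G p) j x ^ 2) i θ =
      2 * (1 / N) * ∑ p, g p p :=
    pd_const_mul_sum_sum_pd_sq univ (fun p _ => hG p) _ i θ
  rw [htrace]
  constructor
  · show 1 / (N.factorial : ℝ) * ∑ π : Equiv.Perm (Fin N), g (π a) (π b) = _
    have : (N : ℝ) - 1 ≠ 0 := sub_ne_zero.2 (by exact_mod_cast hN.ne')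
    field_simp
    linear_combination (N : ℝ) * hoff - hdiag
  · show 1 / (N.factorial : ℝ) * ∑ π : Equiv.Perm (Fin N), g (π a) (π a) = _
    field_simp
    linear_combination hdiag

/-- Averaging over dataset permutations: with `L = (1/N) ∑ ℓ_p` and
`tr Σ(θ) = (1/N) ∑_p ‖∇(ℓ_p − L)(θ)‖²`, for a uniformly random permutation `π`,
`E_π[∇²(ℓ_{π(1)} − L) ∇(ℓ_{π(2)} − L)] = −∇(tr Σ)/(2(N−1))` and
`E_π[∇²(ℓ_{π(1)} − L) ∇(ℓ_{π(1)} − L)] = ∇(tr Σ)/2`, componentwise. -/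
theorem stmt19 (d N : ℕ) (hN : 2 ≤ N) (ℓ : Fin N → (Fin d → ℝ) → ℝ)
    (hℓ : ∀ p, ContDiff ℝ 2 (ℓ p)) (θ : Fin d → ℝ) :
    ∀ i : Fin d,
      ((1 / (Nat.factorial N : ℝ)) * ∑ π : Equiv.Perm (Fin N), ∑ j : Fin d,
          pd (pd (fun y => ℓ (π ⟨0, by omega⟩) y -
            (1 / (N : ℝ)) * ∑ p : Fin N, ℓ p y) j) i θ *
          pd (fun y => ℓ (π ⟨1, by omega⟩) y -
            (1 / (N : ℝ)) * ∑ p : Fin N, ℓ p y) j θ) =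
        -pd (fun x => (1 / (N : ℝ)) * ∑ p : Fin N, ∑ j : Fin d,
            (pd (fun y => ℓ p y - (1 / (N : ℝ)) * ∑ q : Fin N, ℓ q y) j x) ^ 2) i θ /
          (2 * ((N : ℝ) - 1)) ∧
      ((1 / (Nat.factorial N : ℝ)) * ∑ π : Equiv.Perm (Fin N), ∑ j : Fin d,
          pd (pd (fun y => ℓ (π ⟨0, by omega⟩) y -
            (1 / (N : ℝ)) * ∑ p : Fin N, ℓ p y) j) i θ *
          pd (fun y => ℓ (π ⟨0, by omega⟩) y -
            (1 / (N : ℝ)) * ∑ p : Fin N, ℓ p y) j θ) =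
        pd (fun x => (1 / (N : ℝ)) * ∑ p : Fin N, ∑ j : Fin d,
            (pd (fun y => ℓ p y - (1 / (N : ℝ)) * ∑ q : Fin N, ℓ q y) j x) ^ 2) i θ / 2 := by
  intro i
  have hsum : ∀ y, ∑ p, (ℓ p y - (1 / (N : ℝ)) * ∑ q, ℓ q y) = 0 := fun y => by
    rw [sum_sub_distrib, sum_const, card_univ, Fintype.card_fin, nsmul_eq_mul]
    field_simp
    ring
  exact sum_perm_pd_pd_mul_pd (G := fun p y => ℓ p y - (1 / (N : ℝ)) * ∑ q, ℓ q y)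
    (fun p => (hℓ p).sub (contDiff_const.mul (ContDiff.sum fun q _ => hℓ q))) hsum θ i
    (a := ⟨0, by omega⟩) (b := ⟨1, by omega⟩) (by simp [Fin.ext_iff])
end
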